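/- For every choice of constants 0 < α ≤ β and T > 0 there exists a constant C > 0 with the following property. For every abstract FEM setting (H, V, ‖·‖_h, a_h) with constants α, β, every N ∈ ℕ with N ≥ 2 and time step k := T/N, every g¹, …, g^{N−1} ∈ H, and every U⁰, …, Uᴺ ∈ V satisfying the implicit scheme ((U^{n+1} − 2Uⁿ + U^{n−1})/k², v) + a_h((U^{n+1} + 2Uⁿ + U^{n−1})/4, v) = (gⁿ, v) for all v ∈ V and n = 1, …, N−1, one has for every 1 ≤ m ≤ N−1: ‖(U^{m+1} − U^m)/k‖ + ‖(U^{m+1} + U^m)/2‖_h ≤ C ( ‖(U¹ − U⁰)/k‖ + ‖(U¹ + U⁰)/2‖_h + max_{1 ≤ n ≤ N−1} ‖gⁿ‖ ). -/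
import Mathlib

open scoped RealInnerProductSpace

set_option maxHeartbeats 1000000 in
/-- Unconditional stability of the implicit fully discrete scheme. -/
theorem implicit_scheme_stability (α β T : ℝ) (hα : 0 < α) (hαβ : α ≤ β) (hT : 0 < T) :
    ∃ C > 0,
      ∀ (H : Type) [NormedAddCommGroup H] [InnerProductSpace ℝ H] [CompleteSpace H]
        (V : Submodule ℝ H) (Nh : Seminorm ℝ V) (a : V →ₗ[ℝ] V →ₗ[ℝ] ℝ),
        (∀ w v : V, a w v = a v w) →
        (∀ w : V, α * Nh w ^ 2 ≤ a w w) →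
        (∀ w v : V, |a w v| ≤ β * Nh w * Nh v) →
        ∀ (N : ℕ) (hN : 2 ≤ N) (k : ℝ), k = T / N →
          ∀ (g : ℕ → H) (U : ℕ → V),
            (∀ n, 1 ≤ n → n ≤ N - 1 → ∀ v : V,
              ⟪(((k ^ 2)⁻¹ • (U (n + 1) - (2 : ℝ) • U n + U (n - 1)) : V) : H), (v : H)⟫
                  + a ((1 / 4 : ℝ) • (U (n + 1) + (2 : ℝ) • U n + U (n - 1))) v
                = ⟪g n, (v : H)⟫) →
            ∀ m, 1 ≤ m → m ≤ N - 1 →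
              ‖(k⁻¹ • (U (m + 1) - U m) : V)‖ + Nh ((1 / 2 : ℝ) • (U (m + 1) + U m))
                ≤ C * (‖(k⁻¹ • (U 1 - U 0) : V)‖ + Nh ((1 / 2 : ℝ) • (U 1 + U 0))
                    + (Finset.Icc 1 (N - 1)).sup' (Finset.nonempty_Icc.mpr (by omega))
                        fun n => ‖g n‖) := by
  have hsα : 0 < Real.sqrt α := Real.sqrt_pos.mpr hα
  set M : ℝ := max 1 (Real.sqrt β) with hM
  have hM1 : (1:ℝ) ≤ M := le_max_left _ _
  refine ⟨(1 + (Real.sqrt α)⁻¹) * (M + T), by positivity, ?_⟩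
  intro H _ _ _ V Nh a hsym hcoer hbound N hN k hk g U hscheme m hm1 hmN
  have hNpos : (0:ℝ) < (N:ℝ) := by exact_mod_cast (by omega : 0 < N)
  have hk0 : 0 < k := by rw [hk]; positivity
  set G : ℝ := (Finset.Icc 1 (N-1)).sup' (Finset.nonempty_Icc.mpr (by omega)) (fun n => ‖g n‖) with hGdef
  have hGmem : ∀ n, 1 ≤ n → n ≤ N - 1 → ‖g n‖ ≤ G := by
    intro n h1 h2
    exact Finset.le_sup' (fun n => ‖g n‖) (Finset.mem_Icc.mpr ⟨h1, h2⟩)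
  have hG0 : 0 ≤ G := le_trans (norm_nonneg (g 1)) (hGmem 1 le_rfl (by omega))
  -- energy
  set E : ℕ → ℝ := fun n =>
    ‖(k⁻¹ • (U (n+1) - U n) : V)‖^2
      + a ((1/2:ℝ) • (U (n+1) + U n)) ((1/2:ℝ) • (U (n+1) + U n)) with hE
  have haNonneg : ∀ w : V, 0 ≤ a w w := fun w =>
    le_trans (by positivity) (hcoer w)
  have hE0 : ∀ n, 0 ≤ E n := fun n => by
    have := haNonneg ((1/2:ℝ) • (U (n+1) + U n)); simp only [hE]; positivity
  have hX : ∀ n, ‖(k⁻¹ • (U (n+1) - U n) : V)‖ ≤ Real.sqrt (E n) := by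
    intro n
    have h1 : ‖(k⁻¹ • (U (n+1) - U n) : V)‖^2 ≤ E n := by
      have := haNonneg ((1/2:ℝ) • (U (n+1) + U n)); simp only [hE]; linarith
    calc ‖(k⁻¹ • (U (n+1) - U n) : V)‖
        = Real.sqrt (‖(k⁻¹ • (U (n+1) - U n) : V)‖^2) := by
          rw [Real.sqrt_sq (norm_nonneg _)]
      _ ≤ Real.sqrt (E n) := Real.sqrt_le_sqrt h1
  have hY : ∀ n, Real.sqrt α * Nh ((1/2:ℝ) • (U (n+1) + U n)) ≤ Real.sqrt (E n) := by
    intro n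
    have h1 : (Real.sqrt α * Nh ((1/2:ℝ) • (U (n+1) + U n)))^2 ≤ E n := by
      have h2 := hcoer ((1/2:ℝ) • (U (n+1) + U n))
      have h3 : (Real.sqrt α)^2 = α := Real.sq_sqrt hα.le
      have h4 : (0:ℝ) ≤ ‖(k⁻¹ • (U (n+1) - U n) : V)‖^2 := by positivity
      simp only [hE]; rw [mul_pow, h3]; linarith
    calc Real.sqrt α * Nh ((1/2:ℝ) • (U (n+1) + U n))
        = Real.sqrt ((Real.sqrt α * Nh ((1/2:ℝ) • (U (n+1) + U n)))^2) := by
          rw [Real.sqrt_sq (by positivity)]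
      _ ≤ Real.sqrt (E n) := Real.sqrt_le_sqrt h1
  -- general inner identity
  have gen : ∀ p q : H, ⟪(k^2)⁻¹ • (p - q), p + q⟫ = ‖k⁻¹ • p‖^2 - ‖k⁻¹ • q‖^2 := by
    intro p q
    rw [← real_inner_self_eq_norm_sq, ← real_inner_self_eq_norm_sq]
    simp only [real_inner_smul_left, real_inner_smul_right, inner_sub_left, inner_add_right,
      inner_sub_right]
    rw [real_inner_comm q p]
    ring
  -- energy identity / one-step estimate
  have key : ∀ j : ℕ, 1 ≤ j + 1 → j + 1 ≤ N - 1 →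
      Real.sqrt (E (j+1)) ≤ Real.sqrt (E j) + k * ‖g (j+1)‖ := by
    intro j h1 h2
    have hs := hscheme (j+1) h1 h2 (U (j+2) - U j)
    simp only [show j+1+1 = j+2 from rfl, Nat.add_sub_cancel] at hs
    -- inner identity
    have hinner : ⟪(((k ^ 2)⁻¹ • (U (j+2) - (2:ℝ) • U (j+1) + U j) : V) : H),
        ((U (j+2) - U j : V) : H)⟫
        = ‖(k⁻¹ • (U (j+2) - U (j+1)) : V)‖^2 - ‖(k⁻¹ • (U (j+1) - U j) : V)‖^2 := by
      have hc : (((k ^ 2)⁻¹ • (U (j+2) - (2:ℝ) • U (j+1) + U j) : V) : H)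
          = (k^2)⁻¹ • (((U (j+2) : H) - (U (j+1) : H)) - ((U (j+1) : H) - (U j : H))) := by
        push_cast; module
      have hc2 : ((U (j+2) - U j : V) : H)
          = ((U (j+2) : H) - (U (j+1) : H)) + ((U (j+1) : H) - (U j : H)) := by
        push_cast; abel
      have hn1 : ‖(k⁻¹ • (U (j+2) - U (j+1)) : V)‖
          = ‖k⁻¹ • ((U (j+2) : H) - (U (j+1) : H))‖ := rfl
      have hn2 : ‖(k⁻¹ • (U (j+1) - U j) : V)‖
          = ‖k⁻¹ • ((U (j+1) : H) - (U j : H))‖ := rfl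
      rw [hc, hc2, hn1, hn2]
      exact gen _ _
    -- bilinear identity
    have ha : a ((1/4:ℝ) • (U (j+2) + (2:ℝ) • U (j+1) + U j)) (U (j+2) - U j)
        = a ((1/2:ℝ) • (U (j+2) + U (j+1))) ((1/2:ℝ) • (U (j+2) + U (j+1)))
          - a ((1/2:ℝ) • (U (j+1) + U j)) ((1/2:ℝ) • (U (j+1) + U j)) := by
      simp only [map_add, map_sub, map_smul, LinearMap.add_apply, LinearMap.sub_apply,
        LinearMap.smul_apply, smul_eq_mul]
      linarith [hsym (U (j+2)) (U (j+1)), hsym (U (j+2)) (U j), hsym (U (j+1)) (U j)]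
    have hEstep : E (j+1) - E j = ⟪g (j+1), ((U (j+2) - U j : V) : H)⟫ := by
      simp only [hE, show j+1+1 = j+2 from rfl]
      linarith [hs, hinner, ha]
    -- estimate RHS
    have hnorm : ∀ i : ℕ, ‖((U (i+1) - U i : V) : H)‖ ≤ k * Real.sqrt (E i) := by
      intro i
      have h := hX i
      have heq : ‖(k⁻¹ • (U (i+1) - U i) : V)‖ = k⁻¹ * ‖((U (i+1) - U i : V) : H)‖ := by
        rw [show ‖(k⁻¹ • (U (i+1) - U i) : V)‖ = ‖k⁻¹ • ((U (i+1) - U i : V) : H)‖ from rfl]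
        rw [norm_smul, Real.norm_eq_abs, abs_of_pos (inv_pos.mpr hk0)]
      rw [heq] at h
      calc ‖((U (i+1) - U i : V) : H)‖
          = k * (k⁻¹ * ‖((U (i+1) - U i : V) : H)‖) := by field_simp
        _ ≤ k * Real.sqrt (E i) := mul_le_mul_of_nonneg_left h hk0.le
    have hnormsum : ‖((U (j+2) - U j : V) : H)‖
        ≤ k * (Real.sqrt (E (j+1)) + Real.sqrt (E j)) := by
      have hc2 : ((U (j+2) - U j : V) : H)
          = ((U (j+2) - U (j+1) : V) : H) + ((U (j+1) - U j : V) : H) := by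
        push_cast; abel
      have h1 := hnorm (j+1)
      have h2 := hnorm j
      simp only [show j+1+1 = j+2 from rfl] at h1
      calc ‖((U (j+2) - U j : V) : H)‖
          ≤ ‖((U (j+2) - U (j+1) : V) : H)‖ + ‖((U (j+1) - U j : V) : H)‖ := by
            rw [hc2]; exact norm_add_le _ _
        _ ≤ k * (Real.sqrt (E (j+1)) + Real.sqrt (E j)) := by linarith
    have hEineq : E (j+1) ≤ E j + (k * ‖g (j+1)‖) * (Real.sqrt (E (j+1)) + Real.sqrt (E j)) := by
      have h1 : ⟪g (j+1), ((U (j+2) - U j : V) : H)⟫ ≤ ‖g (j+1)‖ * ‖((U (j+2) - U j : V) : H)‖ :=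
        real_inner_le_norm _ _
      have h2 : ‖g (j+1)‖ * ‖((U (j+2) - U j : V) : H)‖
          ≤ ‖g (j+1)‖ * (k * (Real.sqrt (E (j+1)) + Real.sqrt (E j))) :=
        mul_le_mul_of_nonneg_left hnormsum (norm_nonneg _)
      nlinarith [hEstep]
    -- conclude sqrt inequality
    have hFn : Real.sqrt (E (j+1)) ^ 2 = E (j+1) := Real.sq_sqrt (hE0 _)
    have hFm : Real.sqrt (E j) ^ 2 = E j := Real.sq_sqrt (hE0 _)
    have hFn0 : 0 ≤ Real.sqrt (E (j+1)) := Real.sqrt_nonneg _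
    have hFm0 : 0 ≤ Real.sqrt (E j) := Real.sqrt_nonneg _
    have hc0 : 0 ≤ k * ‖g (j+1)‖ := by positivity
    nlinarith [hEineq, mul_nonneg hc0 hFm0, mul_nonneg hc0 hFn0,
      sq_nonneg (Real.sqrt (E (j+1)) - Real.sqrt (E j))]
  -- iterate
  have iter : ∀ m : ℕ, m ≤ N - 1 → Real.sqrt (E m) ≤ Real.sqrt (E 0) + m * (k * G) := by
    intro m
    induction m with
    | zero => intro _; simp
    | succ j ih =>
      intro hj
      have hgj : ‖g (j+1)‖ ≤ G := hGmem (j+1) (by omega) hj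
      have h1 := key j (by omega) hj
      have h2 := ih (by omega)
      have h3 : k * ‖g (j+1)‖ ≤ k * G := mul_le_mul_of_nonneg_left hgj hk0.le
      push_cast
      nlinarith
  -- assemble
  have hFm := iter m hmN
  have hmk : (m:ℝ) * k ≤ T := by
    have hm : (m:ℝ) ≤ (N:ℝ) := by exact_mod_cast (by omega : m ≤ N)
    rw [hk, div_eq_mul_inv]
    calc (m:ℝ) * (T * (N:ℝ)⁻¹) ≤ (N:ℝ) * (T * (N:ℝ)⁻¹) := by
          apply mul_le_mul_of_nonneg_right hm; positivity
      _ = T := by field_simp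
  have hmkG : (m:ℝ) * (k * G) ≤ T * G := by
    rw [← mul_assoc]; exact mul_le_mul_of_nonneg_right hmk hG0
  -- bound on E 0
  set X0 : ℝ := ‖(k⁻¹ • (U 1 - U 0) : V)‖ with hX0
  set Y0 : ℝ := Nh ((1/2:ℝ) • (U 1 + U 0)) with hY0
  have hX00 : 0 ≤ X0 := norm_nonneg _
  have hY00 : 0 ≤ Y0 := apply_nonneg _ _
  have hE0bound : Real.sqrt (E 0) ≤ X0 + Real.sqrt β * Y0 := by
    have hb := le_of_abs_le (hbound ((1/2:ℝ) • (U 1 + U 0)) ((1/2:ℝ) • (U 1 + U 0)))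
    have h1 : E 0 ≤ X0^2 + β * Y0^2 := by
      simp only [hE, show (0:ℕ)+1 = 1 from rfl, hX0, hY0]
      nlinarith [hb]
    have hsβ : Real.sqrt β ^ 2 = β := Real.sq_sqrt (le_trans hα.le hαβ)
    have h2 : E 0 ≤ (X0 + Real.sqrt β * Y0)^2 := by
      have hb0 : 0 ≤ Real.sqrt β := Real.sqrt_nonneg _
      nlinarith [h1, hsβ, mul_nonneg (mul_nonneg hb0 hX00) hY00]
    calc Real.sqrt (E 0) ≤ Real.sqrt ((X0 + Real.sqrt β * Y0)^2) := Real.sqrt_le_sqrt h2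
      _ = X0 + Real.sqrt β * Y0 := Real.sqrt_sq (by positivity)
  -- final
  have hXm := hX m
  have hYm := hY m
  have hsβM : Real.sqrt β ≤ M := le_max_right _ _
  have hM0 : (0:ℝ) ≤ M := le_trans zero_le_one hM1
  have hFmT : Real.sqrt (E m) ≤ M * (X0 + Y0) + T * G := by
    have e1 : X0 ≤ M * X0 := by nlinarith
    have e2 : Real.sqrt β * Y0 ≤ M * Y0 := mul_le_mul_of_nonneg_right hsβM hY00
    have e3 : M * (X0 + Y0) = M * X0 + M * Y0 := by ring
    linarith [hFm, hmkG, hE0bound]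
  have hfinal : Real.sqrt (E m) ≤ (M + T) * (X0 + Y0 + G) := by
    nlinarith [mul_nonneg hM0 hG0, mul_nonneg hT.le hX00, mul_nonneg hT.le hY00]
  have hYm' : Nh ((1/2:ℝ) • (U (m+1) + U m)) ≤ (Real.sqrt α)⁻¹ * Real.sqrt (E m) := by
    have h := mul_le_mul_of_nonneg_left hYm (inv_nonneg.mpr hsα.le)
    rwa [← mul_assoc, inv_mul_cancel₀ hsα.ne', one_mul] at h
  have hsum : ‖(k⁻¹ • (U (m+1) - U m) : V)‖ + Nh ((1/2:ℝ) • (U (m+1) + U m))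
      ≤ (1 + (Real.sqrt α)⁻¹) * Real.sqrt (E m) := by
    nlinarith [Real.sqrt_nonneg (E m)]
  calc ‖(k⁻¹ • (U (m+1) - U m) : V)‖ + Nh ((1/2:ℝ) • (U (m+1) + U m))
      ≤ (1 + (Real.sqrt α)⁻¹) * Real.sqrt (E m) := hsum
    _ ≤ (1 + (Real.sqrt α)⁻¹) * ((M + T) * (X0 + Y0 + G)) := by
        apply mul_le_mul_of_nonneg_left hfinal; positivity
    _ = (1 + (Real.sqrt α)⁻¹) * (M + T) * (X0 + Y0 + G) := by ring
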